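/- arXiv:1710.01623 — 8 statements merged into one kernel-verified Lean document; each statement's English description precedes it below -/
import Mathlib

section
/- Let n ≥ 1 and let A, H be real n×n matrices such that H is symmetric and positive definite, and such that the product HA is positive definite in the sense that zᵀ(HA)z > 0 for every nonzero z ∈ ℝⁿ (HA is not assumed symmetric). Then every complex eigenvalue λ of A, i.e. every λ ∈ ℂ for which the complexification of A admits a nonzero eigenvector u ∈ ℂⁿ with Au = λu, has strictly positive real part. -/
/-!
If `A u = λ u` with `u = x + i y`, then `u* (H A) u = λ (u* H u)`. For a real matrix `M` the
real part of `u* M u` is `xᵀ M x + yᵀ M y`, so both `u* H u` and `u* (H A) u` have positive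
real part, and `u* H u` is real because `H` is symmetric. Taking real parts gives
`Re (u* (H A) u) = Re λ · u* H u`, whence `Re λ > 0`.
-/

open Matrix

namespace Matrix

variable {ι : Type*} [Fintype ι]

theorem re_star_dotProduct_map_ofReal_mulVec (M : Matrix ι ι ℝ) (u : ι → ℂ) :
    (star u ⬝ᵥ (M.map ((↑) : ℝ → ℂ) *ᵥ u)).re =
      (Complex.re ∘ u) ⬝ᵥ (M *ᵥ (Complex.re ∘ u)) + (Complex.im ∘ u) ⬝ᵥ (M *ᵥ (Complex.im ∘ u)) := by
  simp only [dotProduct, mulVec, map_apply, Pi.star_apply, Finset.mul_sum, Complex.re_sum,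
    ← Finset.sum_add_distrib]
  refine Finset.sum_congr rfl fun i _ => Finset.sum_congr rfl fun j _ => ?_
  simp [Complex.mul_re, Complex.mul_im]

theorem im_star_dotProduct_map_ofReal_mulVec (M : Matrix ι ι ℝ) (u : ι → ℂ) :
    (star u ⬝ᵥ (M.map ((↑) : ℝ → ℂ) *ᵥ u)).im =
      (Complex.re ∘ u) ⬝ᵥ (M *ᵥ (Complex.im ∘ u)) - (Complex.im ∘ u) ⬝ᵥ (M *ᵥ (Complex.re ∘ u)) := by
  simp only [dotProduct, mulVec, map_apply, Pi.star_apply, Finset.mul_sum, Complex.im_sum,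
    ← Finset.sum_sub_distrib]
  refine Finset.sum_congr rfl fun i _ => Finset.sum_congr rfl fun j _ => ?_
  simp [Complex.mul_re, Complex.mul_im]
  ring

theorem IsSymm.im_star_dotProduct_map_ofReal_mulVec {M : Matrix ι ι ℝ} (hM : M.IsSymm)
    (u : ι → ℂ) : (star u ⬝ᵥ (M.map ((↑) : ℝ → ℂ) *ᵥ u)).im = 0 := by
  rw [Matrix.im_star_dotProduct_map_ofReal_mulVec, dotProduct_mulVec, ← mulVec_transpose,
    hM.eq, dotProduct_comm, sub_self]

theorem re_star_dotProduct_map_ofReal_mulVec_pos {M : Matrix ι ι ℝ}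
    (hM : ∀ z : ι → ℝ, z ≠ 0 → 0 < z ⬝ᵥ (M *ᵥ z)) {u : ι → ℂ} (hu : u ≠ 0) :
    0 < (star u ⬝ᵥ (M.map ((↑) : ℝ → ℂ) *ᵥ u)).re := by
  have hM' (z : ι → ℝ) : 0 ≤ z ⬝ᵥ (M *ᵥ z) := by
    rcases eq_or_ne z 0 with rfl | hz
    · simp
    · exact (hM z hz).le
  have hxy : Complex.re ∘ u ≠ 0 ∨ Complex.im ∘ u ≠ 0 := by
    by_contra! h
    exact hu (funext fun i => Complex.ext (congrFun h.1 i) (congrFun h.2 i))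
  rw [re_star_dotProduct_map_ofReal_mulVec]
  rcases hxy with hx | hy
  · exact add_pos_of_pos_of_nonneg (hM _ hx) (hM' _)
  · exact add_pos_of_nonneg_of_pos (hM' _) (hM _ hy)

end Matrix

theorem eigenvalues_posRe_of_entropy_structure_general
    (n : ℕ) (A H : Matrix (Fin n) (Fin n) ℝ)
    (hHsymm : H.IsSymm)
    (hHpd : ∀ z : Fin n → ℝ, z ≠ 0 → 0 < z ⬝ᵥ (H *ᵥ z))
    (hHApd : ∀ z : Fin n → ℝ, z ≠ 0 → 0 < z ⬝ᵥ ((H * A) *ᵥ z))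
    (lam : ℂ) (u : Fin n → ℂ) (hu : u ≠ 0)
    (heig : (A.map (fun x : ℝ => (x : ℂ))) *ᵥ u = lam • u) :
    0 < lam.re := by
  set p := star u ⬝ᵥ (H.map ((↑) : ℝ → ℂ) *ᵥ u)
  have hq : star u ⬝ᵥ ((H * A).map ((↑) : ℝ → ℂ) *ᵥ u) = lam * p := by
    have hmap : (H * A).map ((↑) : ℝ → ℂ) = H.map (↑) * A.map (↑) :=
      Matrix.map_mul (f := Complex.ofRealHom)
    rw [hmap, ← mulVec_mulVec, heig, mulVec_smul, dotProduct_smul, smul_eq_mul]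
  have hre : 0 < lam.re * p.re := by
    simpa [hq, Complex.mul_re, hHsymm.im_star_dotProduct_map_ofReal_mulVec, p] using
      re_star_dotProduct_map_ofReal_mulVec_pos hHApd hu
  exact pos_of_mul_pos_left hre (re_star_dotProduct_map_ofReal_mulVec_pos hHpd hu).le

/-- Any real matrix `A` such that `H * A` is positive definite for some symmetric
positive definite `H` has all its complex eigenvalues with strictly positive real part. -/
theorem eigenvalues_posRe_of_entropy_structure
    (n : ℕ) (hn : 1 ≤ n) (A H : Matrix (Fin n) (Fin n) ℝ)
    (hHsymm : H.IsSymm)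
    (hHpd : ∀ z : Fin n → ℝ, z ≠ 0 → 0 < z ⬝ᵥ (H *ᵥ z))
    (hHApd : ∀ z : Fin n → ℝ, z ≠ 0 → 0 < z ⬝ᵥ ((H * A) *ᵥ z))
    (lam : ℂ) (u : Fin n → ℂ) (hu : u ≠ 0)
    (heig : (A.map (fun x : ℝ => (x : ℂ))) *ᵥ u = lam • u) :
    0 < lam.re :=
  eigenvalues_posRe_of_entropy_structure_general n A H hHsymm hHpd hHApd lam u hu heig
end

section
/- Let d₀, d₁, d₂ > 0 and let u = (u₁, u₂) satisfy u₁ > 0, u₂ > 0, u₁ + u₂ < 1, and set u₃ = 1 − u₁ − u₂. Then for every z = (z₁, z₂) ∈ ℝ², the Maxwell–Stefan diffusion matrix A(u) and the entropy Hessian H(u) satisfy the identity zᵀ H(u) A(u) z = (1/a(u)) · ( d₂ z₁²/u₁ + d₁ z₂²/u₂ + d₀ (z₁ + z₂)²/u₃ ). -/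
/-!
Writing `u3 = 1 - u1 - u2`, the entropy Hessian is `diag(1/u1, 1/u2) + (1/u3) 𝟙𝟙ᵀ`, and multiplying
it against the unscaled Maxwell–Stefan matrix collapses to the symmetric matrix
`diag(d2/u1, d1/u2) + (d0/u3) 𝟙𝟙ᵀ`. Its quadratic form is the announced sum of squares, and the
scalar `1/a(u)` factors out.
-/

open Matrix

/-- Maxwell–Stefan diffusion matrix for three components (in terms of the two
independent volume fractions `u1, u2`), including the factor `1 / a(u)`. -/
noncomputable def msA (d0 d1 d2 u1 u2 : ℝ) : Matrix (Fin 2) (Fin 2) ℝ :=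
  (1 / (d1 * d2 * (1 - u1 - u2) + d0 * (d1 * u1 + d2 * u2))) •
    !![d2 + (d0 - d2) * u1, (d0 - d1) * u1;
       (d0 - d2) * u2, d1 + (d0 - d1) * u2]

/-- Hessian of the Maxwell–Stefan entropy density
`h(u) = u1(log u1 - 1) + u2(log u2 - 1) + u3(log u3 - 1)`, `u3 = 1 - u1 - u2`. -/
noncomputable def msH (u1 u2 : ℝ) : Matrix (Fin 2) (Fin 2) ℝ :=
  !![1 / u1 + 1 / (1 - u1 - u2), 1 / (1 - u1 - u2);
     1 / (1 - u1 - u2), 1 / u2 + 1 / (1 - u1 - u2)]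

theorem dotProduct_mulVec_diag_add_const {R : Type*} [CommRing R] (p q r : R) (z : Fin 2 → R) :
    z ⬝ᵥ (!![p + r, r; r, q + r] *ᵥ z) = p * z 0 ^ 2 + q * z 1 ^ 2 + r * (z 0 + z 1) ^ 2 := by
  simp only [dotProduct, mulVec, Fin.sum_univ_two, of_apply, cons_val', cons_val_zero,
    cons_val_one, empty_val', cons_val_fin_one]
  ring

theorem msH_mul_msA {d0 d1 d2 u1 u2 : ℝ} (hu1 : u1 ≠ 0) (hu2 : u2 ≠ 0)
    (hu3 : 1 - u1 - u2 ≠ 0) :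
    msH u1 u2 * msA d0 d1 d2 u1 u2
      = (1 / (d1 * d2 * (1 - u1 - u2) + d0 * (d1 * u1 + d2 * u2))) •
        !![d2 / u1 + d0 / (1 - u1 - u2), d0 / (1 - u1 - u2);
           d0 / (1 - u1 - u2), d1 / u2 + d0 / (1 - u1 - u2)] := by
  rw [msA, Matrix.mul_smul, msH, mul_fin_two]
  congr 1
  ext i j
  fin_cases i <;> fin_cases j <;>
    simp only [of_apply, cons_val', cons_val_zero, cons_val_one, empty_val', cons_val_fin_one,
      Fin.zero_eta, Fin.mk_one] <;> field_simp <;> ring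

theorem maxwellStefan_entropy_identity_general
    (d0 d1 d2 u1 u2 : ℝ)
    (hu1 : 0 < u1) (hu2 : 0 < u2) (hsum : u1 + u2 < 1) (z : Fin 2 → ℝ) :
    z ⬝ᵥ ((msH u1 u2 * msA d0 d1 d2 u1 u2) *ᵥ z)
      = (1 / (d1 * d2 * (1 - u1 - u2) + d0 * (d1 * u1 + d2 * u2))) *
        (d2 * (z 0) ^ 2 / u1 + d1 * (z 1) ^ 2 / u2
          + d0 * (z 0 + z 1) ^ 2 / (1 - u1 - u2)) := by
  have hu3 : 1 - u1 - u2 ≠ 0 := by linarith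
  rw [msH_mul_msA hu1.ne' hu2.ne' hu3, smul_mulVec, dotProduct_smul,
    dotProduct_mulVec_diag_add_const, smul_eq_mul]
  ring

/-- Entropy-production identity for the Maxwell–Stefan system:
`zᵀ H(u) A(u) z = (1/a(u)) (d2 z1²/u1 + d1 z2²/u2 + d0 (z1+z2)²/u3)`. -/
theorem maxwellStefan_entropy_identity
    (d0 d1 d2 u1 u2 : ℝ) (hd0 : 0 < d0) (hd1 : 0 < d1) (hd2 : 0 < d2)
    (hu1 : 0 < u1) (hu2 : 0 < u2) (hsum : u1 + u2 < 1) (z : Fin 2 → ℝ) :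
    z ⬝ᵥ ((msH u1 u2 * msA d0 d1 d2 u1 u2) *ᵥ z)
      = (1 / (d1 * d2 * (1 - u1 - u2) + d0 * (d1 * u1 + d2 * u2))) *
        (d2 * (z 0) ^ 2 / u1 + d1 * (z 1) ^ 2 / u2
          + d0 * (z 0 + z 1) ^ 2 / (1 - u1 - u2)) :=
  maxwellStefan_entropy_identity_general d0 d1 d2 u1 u2 hu1 hu2 hsum z
end

section
/- Let d₀, d₁, d₂ > 0 and let u = (u₁, u₂) satisfy u₁ > 0, u₂ > 0, u₁ + u₂ < 1. Then every complex eigenvalue of the Maxwell–Stefan diffusion matrix A(u) has strictly positive real part; that is, the Maxwell–Stefan diffusion operator is normally elliptic. -/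
/-!
An eigenvalue `λ` of a real `2 × 2` matrix solves `λ² - (tr A) λ + det A = 0`. If `λ` is not real,
then `Re λ = tr A / 2`; if it is real, both roots are real with positive sum and product. So
positive trace and determinant force `Re λ > 0`. For the Maxwell–Stefan matrix,
`det A(u) = 1 / a(u)` and `tr A(u) = (d₂(1 - u₁) + d₁(1 - u₂) + d₀(u₁ + u₂)) / a(u)`.
-/

open Matrix

theorem Complex.re_pos_of_sq_sub_mul_add_eq_zero {z : ℂ} {t d : ℝ} (ht : 0 < t) (hd : 0 < d)
    (hz : z ^ 2 - t * z + d = 0) : 0 < z.re := by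
  have hre := congrArg Complex.re hz
  have him := congrArg Complex.im hz
  simp only [pow_two, Complex.sub_re, Complex.add_re, Complex.mul_re, Complex.ofReal_re,
    Complex.ofReal_im, Complex.sub_im, Complex.add_im, Complex.mul_im, Complex.zero_re,
    Complex.zero_im] at hre him
  rcases mul_eq_zero.mp (show z.im * (2 * z.re - t) = 0 by linarith) with him0 | hhalf
  · rw [him0] at hre
    by_contra! hneg
    nlinarith
  · linarith

theorem Matrix.sq_sub_trace_mul_add_det_eq_zero_of_mulVec_eq_smul
    {M : Matrix (Fin 2) (Fin 2) ℝ} {lam : ℂ} {v : Fin 2 → ℂ} (hv : v ≠ 0)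
    (heig : M.map ((↑) : ℝ → ℂ) *ᵥ v = lam • v) :
    lam ^ 2 - (M.trace : ℂ) * lam + (M.det : ℂ) = 0 := by
  have hdet : (lam • (1 : Matrix (Fin 2) (Fin 2) ℂ) - M.map ((↑) : ℝ → ℂ)).det = 0 := by
    refine Matrix.exists_mulVec_eq_zero_iff.mp ⟨v, hv, ?_⟩
    rw [sub_mulVec, smul_mulVec, one_mulVec, heig, sub_self]
  rw [det_fin_two] at hdet
  rw [trace_fin_two, det_fin_two]
  simp only [sub_apply, smul_apply, one_apply_eq, one_apply_ne, map_apply, smul_eq_mul, mul_one,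
    mul_zero, zero_sub, ne_eq, zero_ne_one, one_ne_zero, not_false_eq_true, mul_neg, neg_mul,
    neg_neg] at hdet
  push_cast
  linear_combination hdet

theorem Matrix.re_pos_of_mulVec_eq_smul_of_trace_pos_of_det_pos
    {M : Matrix (Fin 2) (Fin 2) ℝ} (htr : 0 < M.trace) (hdet : 0 < M.det)
    {lam : ℂ} {v : Fin 2 → ℂ} (hv : v ≠ 0) (heig : M.map ((↑) : ℝ → ℂ) *ᵥ v = lam • v) :
    0 < lam.re :=
  Complex.re_pos_of_sq_sub_mul_add_eq_zero htr hdet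
    (sq_sub_trace_mul_add_det_eq_zero_of_mulVec_eq_smul hv heig)

section
variable {d0 d1 d2 u1 u2 : ℝ}

theorem msA_det :
    (msA d0 d1 d2 u1 u2).det = 1 / (d1 * d2 * (1 - u1 - u2) + d0 * (d1 * u1 + d2 * u2)) := by
  rw [msA, det_smul, det_fin_two_of, Fintype.card_fin]
  generalize ha : d1 * d2 * (1 - u1 - u2) + d0 * (d1 * u1 + d2 * u2) = a
  have hdet : (d2 + (d0 - d2) * u1) * (d1 + (d0 - d1) * u2) - (d0 - d1) * u1 * ((d0 - d2) * u2)
      = a := by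
    rw [← ha]; ring
  rw [hdet]
  rcases eq_or_ne a 0 with rfl | hne
  · simp
  · field_simp

theorem msA_trace : (msA d0 d1 d2 u1 u2).trace =
    (d2 * (1 - u1) + d1 * (1 - u2) + d0 * (u1 + u2)) /
      (d1 * d2 * (1 - u1 - u2) + d0 * (d1 * u1 + d2 * u2)) := by
  rw [msA, trace_smul, trace_fin_two_of, smul_eq_mul]
  ring
end

/-- Every complex eigenvalue of the Maxwell–Stefan diffusion matrix `A(u)` has
strictly positive real part, i.e. the Maxwell–Stefan operator is normally elliptic. -/
theorem maxwellStefan_normally_elliptic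
    (d0 d1 d2 u1 u2 : ℝ) (hd0 : 0 < d0) (hd1 : 0 < d1) (hd2 : 0 < d2)
    (hu1 : 0 < u1) (hu2 : 0 < u2) (hsum : u1 + u2 < 1)
    (lam : ℂ) (v : Fin 2 → ℂ) (hv : v ≠ 0)
    (heig : ((msA d0 d1 d2 u1 u2).map (fun x : ℝ => (x : ℂ))) *ᵥ v = lam • v) :
    0 < lam.re := by
  have ha : 0 < d1 * d2 * (1 - u1 - u2) + d0 * (d1 * u1 + d2 * u2) := by
    have : 0 < 1 - u1 - u2 := by linarith
    positivity
  have htr : 0 < d2 * (1 - u1) + d1 * (1 - u2) + d0 * (u1 + u2) := by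
    have : 0 < 1 - u1 := by linarith
    have : 0 < 1 - u2 := by linarith
    positivity
  refine Matrix.re_pos_of_mulVec_eq_smul_of_trace_pos_of_det_pos ?_ ?_ hv heig
  · rw [msA_trace]; positivity
  · rw [msA_det]; positivity
end

section
/- Let d₀, d₁, d₂ > 0. Then there exists κ > 0 (for instance κ = min(d₁, d₂)/max(d₁d₂, d₀d₁, d₀d₂)) such that for all u = (u₁, u₂) with u₁ > 0, u₂ > 0, u₁ + u₂ < 1 and all z = (z₁, z₂) ∈ ℝ²: zᵀ H(u) A(u) z ≥ κ ( z₁²/u₁ + z₂²/u₂ ). In particular, the Maxwell–Stefan system satisfies hypothesis (H2) of the boundedness-by-entropy method with exponent m = 1/2. -/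
/-!
Writing `u₃ = 1 - u₁ - u₂` and `a(u)` for the denominator of `A(u)`, the quadratic form
of `H(u) A(u)` is `(d₂ z₁²/u₁ + d₁ z₂²/u₂ + d₀ (z₁ + z₂)²/u₃) / a(u)`.
Dropping the nonnegative last term bounds the numerator below by `min d₁ d₂ (z₁²/u₁ + z₂²/u₂)`,
and `a(u)`, a convex combination of `d₁d₂, d₀d₁, d₀d₂`, is at most their maximum.
-/

open Matrix

theorem dotProduct_msH_mul_msA_mulVec (d0 d1 d2 u1 u2 : ℝ) (hu1 : u1 ≠ 0) (hu2 : u2 ≠ 0)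
    (hu3 : 1 - u1 - u2 ≠ 0) (z : Fin 2 → ℝ) :
    z ⬝ᵥ ((msH u1 u2 * msA d0 d1 d2 u1 u2) *ᵥ z) =
      (d2 * z 0 ^ 2 / u1 + d1 * z 1 ^ 2 / u2 + d0 * (z 0 + z 1) ^ 2 / (1 - u1 - u2)) /
        (d1 * d2 * (1 - u1 - u2) + d0 * (d1 * u1 + d2 * u2)) := by
  simp only [msH, msA, dotProduct, Matrix.mulVec, Matrix.mul_apply, Fin.sum_univ_two, Matrix.smul_apply, Matrix.of_apply, Matrix.cons_val',
    Matrix.cons_val_zero, Matrix.cons_val_one, Matrix.cons_val_fin_one, Matrix.empty_val',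
    smul_eq_mul]
  field_simp
  ring

theorem convex_combination_le_of_le {p q r u1 u2 u3 M : ℝ} (hp : p ≤ M) (hq : q ≤ M)
    (hr : r ≤ M) (hu1 : 0 ≤ u1) (hu2 : 0 ≤ u2) (hu3 : 0 ≤ u3) (hsum : u1 + u2 + u3 = 1) :
    p * u1 + q * u2 + r * u3 ≤ M := by
  have := add_le_add (add_le_add (mul_le_mul_of_nonneg_right hp hu1)
    (mul_le_mul_of_nonneg_right hq hu2)) (mul_le_mul_of_nonneg_right hr hu3)
  rwa [← mul_add, ← mul_add, hsum, mul_one] at this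

theorem min_mul_add_sq_div_le {d0 d1 d2 u1 u2 u3 : ℝ} (hd0 : 0 ≤ d0) (hu1 : 0 ≤ u1)
    (hu2 : 0 ≤ u2) (hu3 : 0 ≤ u3) (x y : ℝ) :
    min d1 d2 * (x ^ 2 / u1 + y ^ 2 / u2) ≤
      d2 * x ^ 2 / u1 + d1 * y ^ 2 / u2 + d0 * (x + y) ^ 2 / u3 := by
  have hx : min d1 d2 * (x ^ 2 / u1) ≤ d2 * x ^ 2 / u1 := by
    rw [mul_div_assoc]; gcongr; exact min_le_right _ _
  have hy : min d1 d2 * (y ^ 2 / u2) ≤ d1 * y ^ 2 / u2 := by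
    rw [mul_div_assoc]; gcongr; exact min_le_left _ _
  have hxy : 0 ≤ d0 * (x + y) ^ 2 / u3 := by positivity
  linarith [mul_add (min d1 d2) (x ^ 2 / u1) (y ^ 2 / u2)]

/-- Hypothesis (H2) of the boundedness-by-entropy method for the Maxwell–Stefan
system with exponent `m = 1/2`: there is `κ > 0` with
`zᵀ H(u) A(u) z ≥ κ (z1²/u1 + z2²/u2)` uniformly in `u`. -/
theorem maxwellStefan_H2_half
    (d0 d1 d2 : ℝ) (hd0 : 0 < d0) (hd1 : 0 < d1) (hd2 : 0 < d2) :
    ∃ κ : ℝ, 0 < κ ∧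
      ∀ u1 u2 : ℝ, 0 < u1 → 0 < u2 → u1 + u2 < 1 →
        ∀ z : Fin 2 → ℝ,
          κ * ((z 0) ^ 2 / u1 + (z 1) ^ 2 / u2)
            ≤ z ⬝ᵥ ((msH u1 u2 * msA d0 d1 d2 u1 u2) *ᵥ z) := by
  set M := max (d1 * d2) (max (d0 * d1) (d0 * d2))
  have hM : 0 < M := lt_max_of_lt_left (by positivity)
  refine ⟨min d1 d2 / M, by positivity, fun u1 u2 hu1 hu2 hu12 z => ?_⟩
  have hu3 : 0 < 1 - u1 - u2 := by linarith
  have ha : 0 < d1 * d2 * (1 - u1 - u2) + d0 * (d1 * u1 + d2 * u2) := by positivity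
  have haM : d1 * d2 * (1 - u1 - u2) + d0 * (d1 * u1 + d2 * u2) ≤ M := by
    have := convex_combination_le_of_le (p := d0 * d1) (q := d0 * d2) (r := d1 * d2) (M := M)
      (le_max_left _ _ |>.trans (le_max_right _ _)) (le_max_right _ _ |>.trans (le_max_right _ _))
      (le_max_left _ _) hu1.le hu2.le hu3.le (by ring)
    linarith
  rw [dotProduct_msH_mul_msA_mulVec d0 d1 d2 u1 u2 hu1.ne' hu2.ne' hu3.ne']
  calc min d1 d2 / M * (z 0 ^ 2 / u1 + z 1 ^ 2 / u2)
      ≤ min d1 d2 * (z 0 ^ 2 / u1 + z 1 ^ 2 / u2) /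
          (d1 * d2 * (1 - u1 - u2) + d0 * (d1 * u1 + d2 * u2)) := by
        rw [div_mul_eq_mul_div]; gcongr
    _ ≤ _ := by gcongr; exact min_mul_add_sq_div_le hd0.le hu1.le hu2.le hu3.le _ _
end

section
/- Let a₁₀, a₁₁, a₁₂, a₂₀, a₂₁, a₂₂ ≥ 0 and let u₁, u₂ > 0. Then for every z = (z₁, z₂) ∈ ℝ², the SKT diffusion matrix A(u) and the entropy Hessian H(u) satisfy the identity zᵀ H(u) A(u) z = a₂₁ (a₁₀/u₁ + a₁₁) z₁² + a₁₂ (a₂₀/u₂ + a₂₂) z₂² + a₁₂ a₂₁ (u₂ z₁ + u₁ z₂)² / (u₁ u₂). -/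
/-!
The Hessian `H(u)` symmetrizes the cross-diffusion: `H(u) A(u)` has both off-diagonal entries
equal to `a₁₂ a₂₁`, and its diagonal entries split as `a₂₁ (a₁₀/u₁ + a₁₁) + a₁₂ a₂₁ u₂/u₁` and
`a₁₂ (a₂₀/u₂ + a₂₂) + a₁₂ a₂₁ u₁/u₂`. The cross-diffusion terms then combine into
`a₁₂ a₂₁ (u₂/u₁ z₁² + 2 z₁ z₂ + u₁/u₂ z₂²) = a₁₂ a₂₁ (u₂ z₁ + u₁ z₂)² / (u₁ u₂)`.
-/

open Matrix

/-- Diffusion matrix of the two-species SKT population model. -/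
def sktA (a10 a11 a12 a20 a21 a22 u1 u2 : ℝ) : Matrix (Fin 2) (Fin 2) ℝ :=
  !![a10 + a11 * u1 + a12 * u2, a12 * u1;
     a21 * u2, a20 + a21 * u1 + a22 * u2]

/-- Hessian of the SKT entropy density `h(u) = a21 u1 (log u1 - 1) + a12 u2 (log u2 - 1)`. -/
noncomputable def sktH (a12 a21 u1 u2 : ℝ) : Matrix (Fin 2) (Fin 2) ℝ :=
  !![a21 / u1, 0; 0, a12 / u2]

theorem Matrix.dotProduct_mulVec_fin_two {R : Type*} [CommSemiring R] (a b c d : R) (z : Fin 2 → R) :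
    z ⬝ᵥ (!![a, b; c, d] *ᵥ z) = a * z 0 ^ 2 + (b + c) * z 0 * z 1 + d * z 1 ^ 2 := by
  simp only [dotProduct, mulVec, Fin.sum_univ_two, of_apply, cons_val', cons_val_zero,
    cons_val_one, empty_val', cons_val_fin_one]
  ring

theorem sktH_mul_sktA (a10 a11 a12 a20 a21 a22 : ℝ) {u1 u2 : ℝ} (hu1 : u1 ≠ 0) (hu2 : u2 ≠ 0) :
    sktH a12 a21 u1 u2 * sktA a10 a11 a12 a20 a21 a22 u1 u2 =
      !![a21 * (a10 / u1 + a11) + a12 * a21 * u2 / u1, a12 * a21;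
         a12 * a21, a12 * (a20 / u2 + a22) + a12 * a21 * u1 / u2] := by
  rw [sktH, sktA, mul_fin_two]
  ext i j
  fin_cases i <;> fin_cases j
  all_goals
    simp only [Fin.zero_eta, Fin.mk_one, of_apply, cons_val', cons_val_zero, cons_val_one,
      empty_val', cons_val_fin_one]
    field_simp
    ring

theorem skt_entropy_identity_general
    (a10 a11 a12 a20 a21 a22 u1 u2 : ℝ)
    (hu1 : 0 < u1) (hu2 : 0 < u2) (z : Fin 2 → ℝ) :
    z ⬝ᵥ ((sktH a12 a21 u1 u2 * sktA a10 a11 a12 a20 a21 a22 u1 u2) *ᵥ z)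
      = a21 * (a10 / u1 + a11) * (z 0) ^ 2 + a12 * (a20 / u2 + a22) * (z 1) ^ 2
        + a12 * a21 * (u2 * z 0 + u1 * z 1) ^ 2 / (u1 * u2) := by
  rw [sktH_mul_sktA _ _ _ _ _ _ hu1.ne' hu2.ne', dotProduct_mulVec_fin_two]
  field_simp
  ring

/-- Entropy-production identity for the two-species SKT model:
`zᵀ H(u) A(u) z = a21 (a10/u1 + a11) z1² + a12 (a20/u2 + a22) z2²
  + a12 a21 (u2 z1 + u1 z2)² / (u1 u2)`. -/
theorem skt_entropy_identity
    (a10 a11 a12 a20 a21 a22 u1 u2 : ℝ)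
    (h10 : 0 ≤ a10) (h11 : 0 ≤ a11) (h12 : 0 ≤ a12)
    (h20 : 0 ≤ a20) (h21 : 0 ≤ a21) (h22 : 0 ≤ a22)
    (hu1 : 0 < u1) (hu2 : 0 < u2) (z : Fin 2 → ℝ) :
    z ⬝ᵥ ((sktH a12 a21 u1 u2 * sktA a10 a11 a12 a20 a21 a22 u1 u2) *ᵥ z)
      = a21 * (a10 / u1 + a11) * (z 0) ^ 2 + a12 * (a20 / u2 + a22) * (z 1) ^ 2
        + a12 * a21 * (u2 * z 0 + u1 * z 1) ^ 2 / (u1 * u2) :=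
  skt_entropy_identity_general a10 a11 a12 a20 a21 a22 u1 u2 hu1 hu2 z
end

section
/- Let a₁₁, a₁₂, a₂₂, a₂₁ ≥ 0 and a₁₀, a₂₀ > 0 with a₁₂, a₂₁ > 0, and set κ = min(a₂₁a₁₀, a₁₂a₂₀) > 0. Then for all u₁, u₂ > 0 and all z = (z₁, z₂) ∈ ℝ²: zᵀ H(u) A(u) z ≥ κ ( z₁²/u₁ + z₂²/u₂ ). In particular, the two-species SKT model satisfies hypothesis (H2) of the boundedness-by-entropy method with exponent m = 1/2. -/
open Matrix

theorem min_mul_add_le_mul_add_mul {R : Type*} [Semiring R] [LinearOrder R] [IsOrderedRing R]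
    {a b x y : R} (hx : 0 ≤ x) (hy : 0 ≤ y) : min a b * (x + y) ≤ a * x + b * y := by
  rw [mul_add]
  exact add_le_add (mul_le_mul_of_nonneg_right (min_le_left a b) hx)
    (mul_le_mul_of_nonneg_right (min_le_right a b) hy)

theorem dotProduct_sktH_mul_sktA_mulVec (a10 a11 a12 a20 a21 a22 : ℝ) {u1 u2 : ℝ}
    (hu1 : u1 ≠ 0) (hu2 : u2 ≠ 0) (z : Fin 2 → ℝ) :
    z ⬝ᵥ ((sktH a12 a21 u1 u2 * sktA a10 a11 a12 a20 a21 a22 u1 u2) *ᵥ z) =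
      a21 * a10 * (z 0 ^ 2 / u1) + a12 * a20 * (z 1 ^ 2 / u2) +
        (a21 * a11 * z 0 ^ 2 + a12 * a22 * z 1 ^ 2 +
          a12 * a21 * (u2 * z 0 + u1 * z 1) ^ 2 / (u1 * u2)) := by
  simp only [sktH, sktA, mul_fin_two, mulVec, dotProduct, Fin.sum_univ_two, of_apply, cons_val',
    cons_val_zero, cons_val_one, empty_val', cons_val_fin_one]
  field_simp
  ring

/-- Hypothesis (H2) with exponent `m = 1/2` for the two-species SKT model:
with `κ = min(a21 a10, a12 a20) > 0` one has
`zᵀ H(u) A(u) z ≥ κ (z1²/u1 + z2²/u2)`. -/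
theorem skt_H2_half
    (a10 a11 a12 a20 a21 a22 : ℝ)
    (h11 : 0 ≤ a11) (h12 : 0 < a12) (h21 : 0 < a21) (h22 : 0 ≤ a22)
    (h10 : 0 < a10) (h20 : 0 < a20) :
    0 < min (a21 * a10) (a12 * a20) ∧
    ∀ u1 u2 : ℝ, 0 < u1 → 0 < u2 →
      ∀ z : Fin 2 → ℝ,
        min (a21 * a10) (a12 * a20) * ((z 0) ^ 2 / u1 + (z 1) ^ 2 / u2)
          ≤ z ⬝ᵥ ((sktH a12 a21 u1 u2 * sktA a10 a11 a12 a20 a21 a22 u1 u2) *ᵥ z) := by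
  refine ⟨by positivity, fun u1 u2 hu1 hu2 z => ?_⟩
  rw [dotProduct_sktH_mul_sktA_mulVec a10 a11 a12 a20 a21 a22 hu1.ne' hu2.ne' z]
  calc min (a21 * a10) (a12 * a20) * (z 0 ^ 2 / u1 + z 1 ^ 2 / u2)
      ≤ a21 * a10 * (z 0 ^ 2 / u1) + a12 * a20 * (z 1 ^ 2 / u2) :=
        min_mul_add_le_mul_add_mul (by positivity) (by positivity)
    _ ≤ _ := le_add_of_nonneg_right (by positivity)
end

section
/- Let n ≥ 1, let aᵢⱼ ≥ 0 for i = 1,…,n and j = 0,1,…,n, and suppose there exist π₁,…,πₙ > 0 satisfying the detailed-balance condition πᵢ aᵢⱼ = πⱼ aⱼᵢ for all i, j = 1,…,n. Let u₁,…,uₙ > 0. Then for every z ∈ ℝⁿ, the n-species SKT diffusion matrix A(u) and the entropy Hessian H(u) = diag(π₁/u₁,…,πₙ/uₙ) satisfy the identity zᵀ H(u) A(u) z = Σᵢ πᵢ (aᵢ₀/uᵢ + 2aᵢᵢ) zᵢ² + Σ_{i<j} πᵢ aᵢⱼ (uⱼ zᵢ + uᵢ zⱼ)² / (uᵢ uⱼ).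 -/
open Matrix

/-- Diffusion matrix of the `n`-species SKT population model:
`A i j = δᵢⱼ (a0 i + ∑ₖ a i k * u k) + a i j * u i`. -/
noncomputable def sktAn (n : ℕ) (a0 : Fin n → ℝ) (a : Fin n → Fin n → ℝ)
    (u : Fin n → ℝ) : Matrix (Fin n) (Fin n) ℝ :=
  fun i j => (if i = j then a0 i + ∑ k, a i k * u k else 0) + a i j * u i

/-- Hessian `diag(π i / u i)` of the entropy density `h(u) = ∑ᵢ πᵢ uᵢ (log uᵢ - 1)`. -/
noncomputable def sktHn (n : ℕ) (π : Fin n → ℝ) (u : Fin n → ℝ) :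
    Matrix (Fin n) (Fin n) ℝ :=
  Matrix.diagonal (fun i => π i / u i)

/-!
Expanding the quadratic form gives `∑ᵢ πᵢ aᵢ₀ zᵢ² / uᵢ + ∑ᵢ ∑ⱼ Qᵢⱼ` with
`Qᵢⱼ = πᵢ aᵢⱼ (uⱼ zᵢ² / uᵢ + zᵢ zⱼ)`. The diagonal terms are `Qᵢᵢ = 2 πᵢ aᵢᵢ zᵢ²`, and for
`i < j` detailed balance `πⱼ aⱼᵢ = πᵢ aᵢⱼ` turns `Qᵢⱼ + Qⱼᵢ` into the perfect square
`πᵢ aᵢⱼ (uⱼ zᵢ + uᵢ zⱼ)² / (uᵢ uⱼ)`.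
-/

theorem Finset.sum_sum_eq_sum_diag_add_sum_lt {ι M : Type*} [Fintype ι] [LinearOrder ι]
    [AddCommMonoid M] (f : ι → ι → M) :
    ∑ i, ∑ j, f i j = ∑ i, f i i + ∑ i, ∑ j, if i < j then f i j + f j i else 0 := by
  have hsplit : ∀ i j, f i j =
      ((if i = j then f i j else 0) + if i < j then f i j else 0) + if j < i then f i j else 0 := by
    intro i j
    rcases lt_trichotomy i j with h | rfl | h
    · simp [h, h.ne, h.not_gt]
    · simp
    · simp [h, h.ne', h.not_gt]
  calc ∑ i, ∑ j, f i j
      = ∑ i, ∑ j, (((if i = j then f i j else 0) + if i < j then f i j else 0)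
          + if j < i then f i j else 0) := by simp_rw [← hsplit]
    _ = ∑ i, f i i + ((∑ i, ∑ j, if i < j then f i j else 0)
          + ∑ i, ∑ j, if i < j then f j i else 0) := by
        simp only [Finset.sum_add_distrib, Finset.sum_ite_eq, Finset.mem_univ, if_true, add_assoc]
        rw [Finset.sum_comm (f := fun i j => if j < i then f i j else 0)]
    _ = ∑ i, f i i + ∑ i, ∑ j, if i < j then f i j + f j i else 0 := by
        simp only [← Finset.sum_add_distrib, ← ite_add_zero]

section SKT

variable {n : ℕ} (a0 : Fin n → ℝ) (a : Fin n → Fin n → ℝ) (π u z : Fin n → ℝ)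

theorem dotProduct_sktHn_mul_sktAn_mulVec (hu : ∀ i, u i ≠ 0) :
    z ⬝ᵥ ((sktHn n π u * sktAn n a0 a u) *ᵥ z)
      = ∑ i, π i * a0 i / u i * z i ^ 2
        + ∑ i, ∑ j, π i * a i j * (u j * z i ^ 2 / u i + z i * z j) := by
  simp only [dotProduct, mulVec, sktHn, sktAn, diagonal_mul, mul_add, add_mul, mul_ite,
    ite_mul, mul_zero, zero_mul, Finset.sum_add_distrib, Finset.sum_ite_eq, Finset.mem_univ,
    if_true, Finset.mul_sum, Finset.sum_mul, add_assoc]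
  congr 1
  · exact Finset.sum_congr rfl fun i _ => by field_simp [hu i]
  · congr 1 <;> exact Finset.sum_congr rfl fun i _ =>
      Finset.sum_congr rfl fun j _ => by field_simp [hu i]

theorem skt_pair_add_swap_eq_sq_div_of_detailed_balance (hu : ∀ i, u i ≠ 0) {i j : Fin n}
    (hdb : π j * a j i = π i * a i j) :
    π i * a i j * (u j * z i ^ 2 / u i + z i * z j) + π j * a j i * (u i * z j ^ 2 / u j + z j * z i)
      = π i * a i j * (u j * z i + u i * z j) ^ 2 / (u i * u j) := by
  rw [hdb]
  field_simp [hu i, hu j]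
  ring

end SKT

theorem sktn_entropy_identity_general
    (n : ℕ) (a0 : Fin n → ℝ) (a : Fin n → Fin n → ℝ)
    (π : Fin n → ℝ)
    (hdb : ∀ i j, π i * a i j = π j * a j i)
    (u : Fin n → ℝ) (hu : ∀ i, 0 < u i) (z : Fin n → ℝ) :
    z ⬝ᵥ ((sktHn n π u * sktAn n a0 a u) *ᵥ z)
      = ∑ i, π i * (a0 i / u i + 2 * a i i) * (z i) ^ 2
        + ∑ i, ∑ j, (if i < j then
            π i * a i j * (u j * z i + u i * z j) ^ 2 / (u i * u j) else 0) := by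
  have hu' : ∀ i, u i ≠ 0 := fun i => (hu i).ne'
  rw [dotProduct_sktHn_mul_sktAn_mulVec a0 a π u z hu', Finset.sum_sum_eq_sum_diag_add_sum_lt,
    ← add_assoc, ← Finset.sum_add_distrib]
  congr 1
  · exact Finset.sum_congr rfl fun i _ => by field_simp [hu' i]; ring
  · refine Finset.sum_congr rfl fun i _ => Finset.sum_congr rfl fun j _ => ?_
    split_ifs
    · exact skt_pair_add_swap_eq_sq_div_of_detailed_balance a π u z hu' (hdb j i)
    · rfl

/-- Entropy-production identity for the `n`-species SKT model under detailed balance: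
`zᵀ H(u) A(u) z = ∑ᵢ πᵢ (aᵢ₀/uᵢ + 2aᵢᵢ) zᵢ²
  + ∑_{i<j} πᵢ aᵢⱼ (uⱼ zᵢ + uᵢ zⱼ)² / (uᵢ uⱼ)`. -/
theorem sktn_entropy_identity
    (n : ℕ) (hn : 1 ≤ n) (a0 : Fin n → ℝ) (a : Fin n → Fin n → ℝ)
    (ha0 : ∀ i, 0 ≤ a0 i) (ha : ∀ i j, 0 ≤ a i j)
    (π : Fin n → ℝ) (hπ : ∀ i, 0 < π i)
    (hdb : ∀ i j, π i * a i j = π j * a j i)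
    (u : Fin n → ℝ) (hu : ∀ i, 0 < u i) (z : Fin n → ℝ) :
    z ⬝ᵥ ((sktHn n π u * sktAn n a0 a u) *ᵥ z)
      = ∑ i, π i * (a0 i / u i + 2 * a i i) * (z i) ^ 2
        + ∑ i, ∑ j, (if i < j then
            π i * a i j * (u j * z i + u i * z j) ^ 2 / (u i * u j) else 0) :=
  sktn_entropy_identity_general n a0 a π hdb u hu z
end

section
/- Let n ≥ 1, let aᵢⱼ ≥ 0 for i = 1,…,n and j = 0,1,…,n, and suppose there exist π₁,…,πₙ > 0 satisfying the detailed-balance condition πᵢ aᵢⱼ = πⱼ aⱼᵢ for all i, j = 1,…,n. Let u₁,…,uₙ > 0. Then the matrix H(u) A(u) is positive semidefinite, and more precisely zᵀ H(u) A(u) z ≥ Σᵢ πᵢ (aᵢ₀/uᵢ + 2aᵢᵢ) zᵢ² for all z ∈ ℝⁿ; in particular, if aᵢᵢ > 0 for all i (self-diffusion), then H(u)A(u) is positive definite and zᵀ H(u) A(u) z ≥ 2 minᵢ(πᵢaᵢᵢ) |z|². -/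
/-!
Write `z = u * w` coordinatewise. Then `zᵀ H(u) A(u) z = ∑ᵢ πᵢ aᵢ₀ uᵢ wᵢ² + ∑ᵢⱼ bᵢⱼ (wᵢ² + wᵢ wⱼ)`
with `bᵢⱼ = πᵢ aᵢⱼ uᵢ uⱼ`, and detailed balance is exactly the symmetry of `b`. For symmetric
weights the double sum equals `½ ∑ᵢⱼ bᵢⱼ (wᵢ + wⱼ)²`, a sum of nonnegative squares; its diagonal
terms alone contribute `2 ∑ᵢ πᵢ aᵢᵢ zᵢ²`.
-/

open Matrix

open Finset

section

variable {ι : Type*} [Fintype ι]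

theorem sum_sum_mul_add_sq_eq {R : Type*} [CommRing R] {b : ι → ι → R}
    (hb : ∀ i j, b i j = b j i) (x : ι → R) :
    ∑ i, ∑ j, b i j * (x i + x j) ^ 2 = 2 * ∑ i, ∑ j, b i j * (x i ^ 2 + x i * x j) := by
  have hswap : ∑ i, ∑ j, b i j * x j ^ 2 = ∑ i, ∑ j, b i j * x i ^ 2 := by
    rw [sum_comm]; simp only [hb]
  calc ∑ i, ∑ j, b i j * (x i + x j) ^ 2
      = ∑ i, ∑ j, (b i j * x i ^ 2 + 2 * (b i j * (x i * x j)) + b i j * x j ^ 2) := by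
        simp only [add_sq]; ring_nf
    _ = 2 * ∑ i, ∑ j, b i j * (x i ^ 2 + x i * x j) := by
        simp only [sum_add_distrib, hswap, mul_add, ← mul_sum]; ring

theorem sum_diag_le_sum_sum {R : Type*} [AddCommMonoid R] [PartialOrder R]
    [IsOrderedAddMonoid R] {f : ι → ι → R} (hf : ∀ i j, 0 ≤ f i j) :
    ∑ i, f i i ≤ ∑ i, ∑ j, f i j :=
  sum_le_sum fun i _ => single_le_sum (fun j _ => hf i j) (mem_univ i)

theorem mul_sum_sq_le_sum_mul_sq {R : Type*} [CommRing R] [LinearOrder R] [IsStrictOrderedRing R]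
    {c : ι → R} {m : R} (hm : ∀ i, m ≤ c i) (z : ι → R) :
    m * ∑ i, z i ^ 2 ≤ ∑ i, c i * z i ^ 2 := by
  rw [mul_sum]
  exact sum_le_sum fun i _ => mul_le_mul_of_nonneg_right (hm i) (sq_nonneg _)

end

section SKT

variable {n : ℕ} {a0 : Fin n → ℝ} {a : Fin n → Fin n → ℝ} {π : Fin n → ℝ} {u : Fin n → ℝ}

theorem sktHn_mul_sktAn_mulVec_apply (hu : ∀ i, u i ≠ 0) (w : Fin n → ℝ) (i : Fin n) :
    ((sktHn n π u * sktAn n a0 a u) *ᵥ (u * w)) i =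
      π i * ((a0 i + ∑ k, a i k * u k) * w i + ∑ j, a i j * u j * w j) := by
  have hA : (sktAn n a0 a u *ᵥ (u * w)) i =
      (a0 i + ∑ k, a i k * u k) * (u i * w i) + u i * ∑ j, a i j * u j * w j := by
    simp only [mulVec, dotProduct, sktAn, Pi.mul_apply, add_mul, sum_add_distrib, ite_mul,
      zero_mul, sum_ite_eq, mem_univ, if_true, mul_sum]
    ring_nf
  rw [sktHn, ← mulVec_mulVec, mulVec_diagonal, hA]
  field_simp [hu i]

theorem sktn_quadForm_eq (hu : ∀ i, u i ≠ 0) (w : Fin n → ℝ) :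
    (u * w) ⬝ᵥ ((sktHn n π u * sktAn n a0 a u) *ᵥ (u * w)) =
      ∑ i, π i * a0 i * u i * w i ^ 2 +
        ∑ i, ∑ j, π i * a i j * u i * u j * (w i ^ 2 + w i * w j) := by
  rw [dotProduct, ← sum_add_distrib]
  refine sum_congr rfl fun i _ => ?_
  rw [sktHn_mul_sktAn_mulVec_apply hu, Pi.mul_apply]
  simp only [mul_add, add_mul, sum_add_distrib, mul_sum, sum_mul]
  ring_nf

theorem sktn_sum_le_quadForm (ha : ∀ i j, 0 ≤ a i j)
    (hπ : ∀ i, 0 < π i) (hdb : ∀ i j, π i * a i j = π j * a j i) (hu : ∀ i, 0 < u i)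
    (z : Fin n → ℝ) :
    ∑ i, π i * (a0 i / u i + 2 * a i i) * z i ^ 2 ≤
      z ⬝ᵥ ((sktHn n π u * sktAn n a0 a u) *ᵥ z) := by
  have hu₀ : ∀ i, u i ≠ 0 := fun i => (hu i).ne'
  set w : Fin n → ℝ := z / u
  have hz : z = u * w := funext fun i => (mul_div_cancel₀ (z i) (hu₀ i)).symm
  set b : Fin n → Fin n → ℝ := fun i j => π i * a i j * u i * u j
  have hb : ∀ i j, b i j = b j i := fun i j => by simp only [b, hdb i j]; ring
  have hdiag : ∑ i, b i i * (w i + w i) ^ 2 ≤ ∑ i, ∑ j, b i j * (w i + w j) ^ 2 :=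
    sum_diag_le_sum_sum (f := fun i j => b i j * (w i + w j) ^ 2) fun i j =>
      mul_nonneg (by have := hπ i; have := hu i; have := hu j; have := ha i j; positivity)
        (sq_nonneg _)
  have hlhs : ∑ i, π i * (a0 i / u i + 2 * a i i) * (u * w) i ^ 2 =
      ∑ i, π i * a0 i * u i * w i ^ 2 + ∑ i, b i i * (w i + w i) ^ 2 / 2 := by
    rw [← sum_add_distrib]
    refine sum_congr rfl fun i _ => ?_
    simp only [b, Pi.mul_apply]
    field_simp [hu₀ i]
    ring
  rw [hz, sktn_quadForm_eq hu₀, hlhs, ← sum_div]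
  linarith [sum_sum_mul_add_sq_eq hb w]

end SKT

/-- Entropy-production lower bound for the `n`-species SKT model under detailed
balance: `H(u) A(u)` is positive semidefinite, more precisely
`zᵀ H(u) A(u) z ≥ ∑ᵢ πᵢ (aᵢ₀/uᵢ + 2aᵢᵢ) zᵢ²`; with self-diffusion `aᵢᵢ > 0`
it is positive definite, with `zᵀ H(u) A(u) z ≥ 2 minᵢ(πᵢ aᵢᵢ) |z|²`. -/
theorem sktn_entropy_lower_bound
    (n : ℕ) (hn : 1 ≤ n) (a0 : Fin n → ℝ) (a : Fin n → Fin n → ℝ)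
    (ha0 : ∀ i, 0 ≤ a0 i) (ha : ∀ i j, 0 ≤ a i j)
    (π : Fin n → ℝ) (hπ : ∀ i, 0 < π i)
    (hdb : ∀ i j, π i * a i j = π j * a j i)
    (u : Fin n → ℝ) (hu : ∀ i, 0 < u i) :
    (∀ z : Fin n → ℝ, 0 ≤ z ⬝ᵥ ((sktHn n π u * sktAn n a0 a u) *ᵥ z)) ∧
    (∀ z : Fin n → ℝ,
      ∑ i, π i * (a0 i / u i + 2 * a i i) * (z i) ^ 2
        ≤ z ⬝ᵥ ((sktHn n π u * sktAn n a0 a u) *ᵥ z)) ∧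
    ((∀ i, 0 < a i i) →
      (∀ z : Fin n → ℝ, z ≠ 0 →
        0 < z ⬝ᵥ ((sktHn n π u * sktAn n a0 a u) *ᵥ z)) ∧
      (∀ z : Fin n → ℝ,
        2 * (Finset.univ.inf' (Finset.univ_nonempty_iff.mpr ⟨⟨0, hn⟩⟩)
            fun i => π i * a i i) * (∑ i, (z i) ^ 2)
          ≤ z ⬝ᵥ ((sktHn n π u * sktAn n a0 a u) *ᵥ z))) := by
  have hbound := sktn_sum_le_quadForm (a0 := a0) ha hπ hdb hu
  have hcoeff : ∀ i, 0 ≤ π i * (a0 i / u i + 2 * a i i) := fun i => by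
    have := ha0 i; have := ha i i; have := hπ i; have := hu i; positivity
  refine ⟨fun z => (sum_nonneg fun i _ => mul_nonneg (hcoeff i) (sq_nonneg _)).trans (hbound z),
    hbound, fun hself => ?_⟩
  set m := univ.inf' (univ_nonempty_iff.mpr ⟨⟨0, hn⟩⟩) fun i => π i * a i i
  have hm_pos : 0 < m := (lt_inf'_iff _).2 fun i _ => mul_pos (hπ i) (hself i)
  have hm_le : ∀ i, 2 * m ≤ π i * (a0 i / u i + 2 * a i i) := fun i => by
    have := inf'_le (fun i => π i * a i i) (mem_univ i)
    have := mul_nonneg (hπ i).le (div_nonneg (ha0 i) (hu i).le)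
    linarith
  have hmin : ∀ z : Fin n → ℝ, 2 * m * ∑ i, z i ^ 2 ≤
      z ⬝ᵥ ((sktHn n π u * sktAn n a0 a u) *ᵥ z) := fun z =>
    (mul_sum_sq_le_sum_mul_sq hm_le z).trans (hbound z)
  refine ⟨fun z hz => ?_, hmin⟩
  obtain ⟨i, hi⟩ := Function.ne_iff.mp hz
  have hsq : 0 < ∑ i, z i ^ 2 :=
    sum_pos' (fun j _ => sq_nonneg _) ⟨i, mem_univ i, sq_pos_of_ne_zero hi⟩
  exact (by positivity : 0 < 2 * m * ∑ i, z i ^ 2).trans_le (hmin z)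
end
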